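/- Let G be a graph and let G' be obtained from G by adding one new universal vertex adjacent to every vertex of G. Then G is 3-colorable if and only if V(G') can be partitioned into sets U and W such that G'[U] is bipartite and G'[W] is a complete bipartite graph. -/
import Mathlib


open SimpleGraph

attribute [local instance] Fintype.ofFinite

/-- A graph property: a (type-indexed) class of finite simple graphs. -/
def GraphProperty : Type 1 := ∀ ⦃V : Type⦄ [Fintype V], SimpleGraph V → Prop

/-- Closure under isomorphism. -/
def IsoClosed (P : GraphProperty) : Prop :=
  ∀ ⦃V W : Type⦄ [Fintype V] [Fintype W] (G : SimpleGraph V) (H : SimpleGraph W),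
    G ≃g H → P G → P H

/-- Closure under disjoint unions (additivity). -/
def AdditiveProp (P : GraphProperty) : Prop :=
  ∀ ⦃V W : Type⦄ [Fintype V] [Fintype W] (G : SimpleGraph V) (H : SimpleGraph W),
    P G → P H → P (G ⊕g H)

/-- Closure under deletion of a vertex (hereditariness). -/
def HereditaryProp (P : GraphProperty) : Prop :=
  ∀ ⦃V : Type⦄ [Fintype V] (G : SimpleGraph V) (v : V), P G → P (G.induce {v}ᶜ)

/-- Closure under deletion of vertices and edges (monotonicity). -/
def MonotoneProp (P : GraphProperty) : Prop :=
  (∀ ⦃V : Type⦄ [Fintype V] (G : SimpleGraph V) (v : V), P G → P (G.induce {v}ᶜ)) ∧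
  (∀ ⦃V : Type⦄ [Fintype V] (G : SimpleGraph V) (e : Sym2 V), P G → P (G.deleteEdges {e}))

/-- The product `P₁ ∘ P₂`: graphs whose vertex set splits into a `P₁`-part and a `P₂`-part. -/
def ProductProp (P₁ P₂ : GraphProperty) : GraphProperty :=
  fun V _ G => ∃ s : Set V, P₁ (G.induce s) ∧ P₂ (G.induce sᶜ)

/-- The complementary property `P̄ = {Ḡ : G ∈ P}`. -/
def CoProp (P : GraphProperty) : GraphProperty :=
  fun V _ G => P Gᶜ

/-- `H` is `P̄₃`-free: no three distinct vertices induce exactly one edge. -/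
def P3barFree {W : Type*} (H : SimpleGraph W) : Prop :=
  ∀ a b c : W, a ≠ b → a ≠ c → b ≠ c → ¬ (H.Adj a b ∧ ¬ H.Adj a c ∧ ¬ H.Adj b c)

/-- `H` is complete bipartite: vertex set splits into two independent sets
with all edges in between. -/
def IsCompleteBipartite {W : Type*} (H : SimpleGraph W) : Prop :=
  ∃ A : Set W, (∀ a ∈ A, ∀ b ∈ A, ¬ H.Adj a b) ∧
    (∀ a ∈ Aᶜ, ∀ b ∈ Aᶜ, ¬ H.Adj a b) ∧
    (∀ a ∈ A, ∀ b ∈ Aᶜ, H.Adj a b)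

/-- `G` together with a new universal vertex. -/
def addUniversal {V : Type} (G : SimpleGraph V) : SimpleGraph (V ⊕ Unit) :=
  SimpleGraph.fromRel (fun x y =>
    match x, y with
    | .inl a, .inl b => G.Adj a b
    | .inl _, .inr _ => True
    | _, _ => False)

lemma addUniv_adj_inl_inl {V : Type} (G : SimpleGraph V) (a b : V) :
    (addUniversal G).Adj (.inl a) (.inl b) ↔ G.Adj a b := by
  rw [addUniversal, SimpleGraph.fromRel_adj]
  constructor
  · rintro ⟨-, h | h⟩
    · exact h
    · exact h.symm
  · intro h
    exact ⟨by simpa using h.ne, Or.inl h⟩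

lemma addUniv_adj_inl_inr {V : Type} (G : SimpleGraph V) (a : V) (u : Unit) :
    (addUniversal G).Adj (.inl a) (.inr u) := by
  rw [addUniversal, SimpleGraph.fromRel_adj]
  exact ⟨by simp, Or.inl trivial⟩

lemma addUniv_not_adj_inr_inr {V : Type} (G : SimpleGraph V) (u u' : Unit) :
    ¬ (addUniversal G).Adj (.inr u) (.inr u') := by
  rw [addUniversal, SimpleGraph.fromRel_adj]
  rintro ⟨h, h' | h'⟩ <;> exact h'

lemma fin2_three (a b c : Fin 2) (h1 : a ≠ b) (h2 : a ≠ c) (h3 : b ≠ c) : False := by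
  fin_cases a <;> fin_cases b <;> fin_cases c <;> simp_all

theorem bipartite_completeBipartite_reduction {V : Type} [Fintype V] (G : SimpleGraph V) :
    G.Colorable 3 ↔
      ∃ U : Set (V ⊕ Unit), ((addUniversal G).induce U).Colorable 2 ∧
        IsCompleteBipartite ((addUniversal G).induce Uᶜ) := by
  constructor
  · rintro ⟨c⟩
    refine ⟨{x | ∃ v, x = Sum.inl v ∧ c v ≠ 2}, ?_, ?_⟩
    · refine ⟨SimpleGraph.Coloring.mk
        (fun x => Sum.elim (fun v => if c v = 0 then (0 : Fin 2) else 1) (fun _ => 0) x.val) ?_⟩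
      rintro ⟨x, hx⟩ ⟨y, hy⟩ hadj
      obtain ⟨v, rfl, hv⟩ := hx
      obtain ⟨w, rfl, hw⟩ := hy
      have hG : G.Adj v w := (addUniv_adj_inl_inl G v w).mp hadj
      have hne : c v ≠ c w := c.valid hG
      simp only [Sum.elim_inl]
      split_ifs with h1 h2 h2
      · exact absurd (h1.trans h2.symm) hne
      · simp
      · simp
      · exfalso
        have hv0 : (c v : ℕ) ≠ 0 := fun h => h1 (Fin.ext h)
        have hw0 : (c w : ℕ) ≠ 0 := fun h => h2 (Fin.ext h)
        have hv2 : (c v : ℕ) ≠ 2 := fun h => hv (Fin.ext h)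
        have hw2 : (c w : ℕ) ≠ 2 := fun h => hw (Fin.ext h)
        have hne' : (c v : ℕ) ≠ (c w : ℕ) := fun h => hne (Fin.ext h)
        have := (c v).isLt
        have := (c w).isLt
        omega
    · refine ⟨{x | x.val = Sum.inr ()}, ?_, ?_, ?_⟩
      · rintro a ha b hb hadj
        have : a.val = b.val := ha.trans hb.symm
        have hadj' : (addUniversal G).Adj a.val b.val := hadj
        rw [ha, hb] at hadj'
        exact addUniv_not_adj_inr_inr G _ _ hadj'
      · rintro ⟨u | u, ha⟩ ha' ⟨w | w, hb⟩ hb' hadj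
        · have hu : c u = 2 := by
            by_contra h
            exact ha ⟨u, rfl, h⟩
          have hw : c w = 2 := by
            by_contra h
            exact hb ⟨w, rfl, h⟩
          have hG : G.Adj u w := (addUniv_adj_inl_inl G u w).mp hadj
          exact c.valid hG (hu.trans hw.symm)
        · exact hb' rfl
        · exact ha' rfl
        · exact ha' rfl
      · rintro ⟨a, ha⟩ ha' ⟨w | w, hb⟩ hb'
        · have : a = Sum.inr () := ha'
          subst this
          exact (addUniv_adj_inl_inr G w ()).symm
        · exact absurd rfl hb'
  · rintro ⟨U, ⟨h2⟩, A, hA, hAc, hAB⟩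
    classical
    by_cases hU : (Sum.inr () : V ⊕ Unit) ∈ U
    · -- universal vertex inside U: all inl-vertices of U get one color
      refine ⟨SimpleGraph.Coloring.mk
        (fun v => if hv : Sum.inl v ∈ U then (0 : Fin 3)
          else if (⟨Sum.inl v, hv⟩ : ↑Uᶜ) ∈ A then 1 else 2) ?_⟩
      intro v w hvw
      by_cases hv : Sum.inl v ∈ U <;> by_cases hw : Sum.inl w ∈ U
      · exfalso
        have hxy : ((addUniversal G).induce U).Adj ⟨Sum.inl v, hv⟩ ⟨Sum.inl w, hw⟩ :=
          (addUniv_adj_inl_inl G v w).mpr hvw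
        have hxz : ((addUniversal G).induce U).Adj ⟨Sum.inl v, hv⟩ ⟨Sum.inr (), hU⟩ :=
          addUniv_adj_inl_inr G v ()
        have hyz : ((addUniversal G).induce U).Adj ⟨Sum.inl w, hw⟩ ⟨Sum.inr (), hU⟩ :=
          addUniv_adj_inl_inr G w ()
        exact fin2_three _ _ _ (h2.valid hxy) (h2.valid hxz) (h2.valid hyz)
      · simp only [dif_pos hv, dif_neg hw]
        split_ifs <;> simp
      · simp only [dif_pos hw, dif_neg hv]
        split_ifs <;> simp
      · simp only [dif_neg hv, dif_neg hw]
        have hadj : ((addUniversal G).induce Uᶜ).Adj ⟨Sum.inl v, hv⟩ ⟨Sum.inl w, hw⟩ :=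
          (addUniv_adj_inl_inl G v w).mpr hvw
        by_cases h1 : (⟨Sum.inl v, hv⟩ : ↑Uᶜ) ∈ A <;>
          by_cases h1' : (⟨Sum.inl w, hw⟩ : ↑Uᶜ) ∈ A
        · exact absurd hadj (hA _ h1 _ h1')
        · rw [if_pos h1, if_neg h1']
          decide
        · rw [if_neg h1, if_pos h1']
          decide
        · exact absurd hadj (hAc _ h1 _ h1')
    · -- universal vertex in Uᶜ: all inl vertices of Uᶜ are pairwise nonadjacent
      have hind : ∀ (v w : V) (hv : Sum.inl v ∉ U) (hw : Sum.inl w ∉ U), ¬ G.Adj v w := by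
        intro v w hv hw hadj
        have hadj' : ((addUniversal G).induce Uᶜ).Adj ⟨Sum.inl v, hv⟩ ⟨Sum.inl w, hw⟩ :=
          (addUniv_adj_inl_inl G v w).mpr hadj
        have hyv : ((addUniversal G).induce Uᶜ).Adj ⟨Sum.inr (), hU⟩ ⟨Sum.inl v, hv⟩ :=
          (addUniv_adj_inl_inr G v ()).symm
        have hyw : ((addUniversal G).induce Uᶜ).Adj ⟨Sum.inr (), hU⟩ ⟨Sum.inl w, hw⟩ :=
          (addUniv_adj_inl_inr G w ()).symm
        by_cases hy : (⟨Sum.inr (), hU⟩ : ↑Uᶜ) ∈ A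
        · have h1 : (⟨Sum.inl v, hv⟩ : ↑Uᶜ) ∈ Aᶜ := fun h => hA _ hy _ h hyv
          have h2' : (⟨Sum.inl w, hw⟩ : ↑Uᶜ) ∈ Aᶜ := fun h => hA _ hy _ h hyw
          exact hAc _ h1 _ h2' hadj'
        · have h1 : (⟨Sum.inl v, hv⟩ : ↑Uᶜ) ∈ A := by
            by_contra h
            exact hAc _ hy _ h hyv
          have h2' : (⟨Sum.inl w, hw⟩ : ↑Uᶜ) ∈ A := by
            by_contra h
            exact hAc _ hy _ h hyw
          exact hA _ h1 _ h2' hadj'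
      refine ⟨SimpleGraph.Coloring.mk
        (fun v => if hv : Sum.inl v ∈ U then (h2 ⟨Sum.inl v, hv⟩).castSucc else 2) ?_⟩
      intro v w hvw
      by_cases hv : Sum.inl v ∈ U <;> by_cases hw : Sum.inl w ∈ U
      · simp only [dif_pos hv, dif_pos hw]
        have hxy : ((addUniversal G).induce U).Adj ⟨Sum.inl v, hv⟩ ⟨Sum.inl w, hw⟩ :=
          (addUniv_adj_inl_inl G v w).mpr hvw
        intro h
        exact h2.valid hxy (Fin.castSucc_injective _ h)
      · simp only [dif_pos hv, dif_neg hw]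
        intro h
        have := (h2 ⟨Sum.inl v, hv⟩).isLt
        have h' : ((h2 ⟨Sum.inl v, hv⟩).castSucc : ℕ) = 2 := by rw [h]; rfl
        rw [Fin.coe_castSucc] at h'
        omega
      · simp only [dif_pos hw, dif_neg hv]
        intro h
        have := (h2 ⟨Sum.inl w, hw⟩).isLt
        have h' : ((h2 ⟨Sum.inl w, hw⟩).castSucc : ℕ) = 2 := by rw [← h]; rfl
        rw [Fin.coe_castSucc] at h'
        omega
      · exact absurd hvw (hind v w hv hw)
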